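/- Let A ∈ ℂ^{d×d} be Hermitian, b ∈ ℂ^d, and t ≥ 1. Suppose x ∈ K_t(A, b), let r = b − A x, and assume r ≠ 0 and that r is orthogonal to the subspace A·K_t(A, b) = span_ℂ{Ab, A²b, …, A^t b} (the Petrov–Galerkin condition satisfied by the t-th MINRES iterate, i.e., ⟨r, A v⟩ = 0 for all v ∈ K_t(A, b)). Then the lifted vector x − (⟨r, x⟩ / ‖r‖²) · r equals the orthogonal projection of x onto the subspace A·K_t(A, b). -/

import Mathlib

open Matrix
open scoped InnerProductSpace ComplexConjugate

/-- The Krylov subspace `K_t(A, b) = span {b, Ab, …, A^{t-1} b}`,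
as a subspace of the Euclidean space `ℂ^d`. -/
noncomputable def Krylov {d : ℕ}
    (A : Matrix (Fin d) (Fin d) ℂ) (b : EuclideanSpace ℂ (Fin d)) (t : ℕ) :
    Submodule ℂ (EuclideanSpace ℂ (Fin d)) :=
  Submodule.span ℂ {v | ∃ i < t, v = Matrix.toEuclideanLin (A ^ i) b}

/-!
Since `K_t ⊆ span {b} + A K_t` and `b - r = A x ∈ A K_t`, the iterate splits as `x = a r + w` with
`w ∈ A K_t`. The residual is orthogonal to `A K_t`, so the projection of `x` is `w = x - a r`, and
pairing `x = a r + w` with `r` gives `a r = (⟪r, x⟫ / ‖r‖²) r`, also for `r = 0`, where Lean's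
division by zero makes both sides vanish.
-/

namespace Submodule

variable {𝕜 E : Type*} [RCLike 𝕜] [NormedAddCommGroup E] [InnerProductSpace 𝕜 E]

theorem starProjection_eq_sub_of_sub_smul_mem {W : Submodule 𝕜 E} [W.HasOrthogonalProjection]
    {r x : E} {a : 𝕜} (hr : r ∈ Wᗮ) (hxr : x - a • r ∈ W) :
    W.starProjection x = x - (⟪r, x⟫_𝕜 / ((‖r‖ : 𝕜) ^ 2)) • r := by
  have hcoeff : (⟪r, x⟫_𝕜 / ((‖r‖ : 𝕜) ^ 2)) • r = a • r := by
    rcases eq_or_ne r 0 with rfl | hr0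
    · simp
    have hinner : ⟪r, x⟫_𝕜 = a * (‖r‖ : 𝕜) ^ 2 := by
      calc ⟪r, x⟫_𝕜 = ⟪r, x - a • r⟫_𝕜 + a * ⟪r, r⟫_𝕜 := by
            rw [inner_sub_right, inner_smul_right, sub_add_cancel]
        _ = a * (‖r‖ : 𝕜) ^ 2 := by
            rw [inner_left_of_mem_orthogonal hxr hr, zero_add, inner_self_eq_norm_sq_to_K]
    rw [hinner, mul_div_cancel_right₀ _ (by simpa using hr0)]
  rw [hcoeff]
  refine eq_starProjection_of_mem_of_inner_eq_zero hxr fun w hw => ?_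
  rw [sub_sub_cancel, inner_smul_left, inner_left_of_mem_orthogonal hw hr, mul_zero]

end Submodule

section Krylov

variable {d : ℕ} (A : Matrix (Fin d) (Fin d) ℂ) (b : EuclideanSpace ℂ (Fin d)) (t : ℕ)

theorem Krylov_le_span_singleton_sup_map :
    Krylov A b t ≤ (ℂ ∙ b) ⊔ (Krylov A b t).map (Matrix.toEuclideanLin A) := by
  rw [Krylov, Submodule.span_le]
  rintro v ⟨_ | i, hi, rfl⟩
  · exact Submodule.mem_sup_left (by simp)
  · refine Submodule.mem_sup_right ⟨_, Submodule.subset_span ⟨i, by omega, rfl⟩, ?_⟩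
    simp [pow_succ']

end Krylov

theorem lifting_is_orthogonal_projection_general {d : ℕ}
    (A : Matrix (Fin d) (Fin d) ℂ) (b x r : EuclideanSpace ℂ (Fin d)) (t : ℕ)
    (hx : x ∈ Krylov A b t)
    (hr : r = b - Matrix.toEuclideanLin A x)
    (horth : ∀ v ∈ Krylov A b t, ⟪r, Matrix.toEuclideanLin A v⟫_ℂ = 0) :
    x - (⟪r, x⟫_ℂ / ((‖r‖ : ℂ) ^ 2)) • r =
      (Submodule.orthogonalProjectionOnto ((Krylov A b t).map (Matrix.toEuclideanLin A)) x :
        EuclideanSpace ℂ (Fin d)) := by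
  set W := (Krylov A b t).map (Matrix.toEuclideanLin A)
  have hrW : r ∈ Wᗮ := by
    rintro _ ⟨v, hv, rfl⟩
    rw [inner_eq_zero_symm]
    exact horth v hv
  have hb : b ∈ (ℂ ∙ r) ⊔ W := by
    rw [show b = r + Matrix.toEuclideanLin A x by rw [hr, sub_add_cancel]]
    exact Submodule.add_mem_sup (Submodule.mem_span_singleton_self r) ⟨x, hx, rfl⟩
  have hxrW : x ∈ (ℂ ∙ r) ⊔ W :=
    sup_le ((Submodule.span_singleton_le_iff_mem _ _).2 hb) le_sup_right
      (Krylov_le_span_singleton_sup_map A b t hx)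
  obtain ⟨_, hy, w, hw, hxd⟩ := Submodule.mem_sup.1 hxrW
  obtain ⟨a, rfl⟩ := Submodule.mem_span_singleton.1 hy
  rw [Submodule.coe_orthogonalProjectionOnto_apply]
  exact (Submodule.starProjection_eq_sub_of_sub_smul_mem hrW (a := a)
    (by rwa [← hxd, add_sub_cancel_left])).symm

/-- The lifted MINRES iterate is the orthogonal projection of `x` onto `A · K_t(A,b)`. -/
theorem lifting_is_orthogonal_projection {d : ℕ}
    (A : Matrix (Fin d) (Fin d) ℂ) (b x r : EuclideanSpace ℂ (Fin d)) (t : ℕ)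
    (ht : 1 ≤ t)
    (hA : A.IsHermitian)
    (hx : x ∈ Krylov A b t)
    (hr : r = b - Matrix.toEuclideanLin A x)
    (hrne : r ≠ 0)
    (horth : ∀ v ∈ Krylov A b t, ⟪r, Matrix.toEuclideanLin A v⟫_ℂ = 0) :
    x - (⟪r, x⟫_ℂ / ((‖r‖ : ℂ) ^ 2)) • r =
      (Submodule.orthogonalProjectionOnto ((Krylov A b t).map (Matrix.toEuclideanLin A)) x :
        EuclideanSpace ℂ (Fin d)) :=
  lifting_is_orthogonal_projection_general A b x r t hx hr horth
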